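/- Let Δ be a Jordan derivation of R = R_n(K,J) with n ≥ 4. Then for y ∈ J, the matrix Δ(y e_{1,n}) has nonzero entries only in row 1, column n, and positions (n−1,1), (n−1,2), (n,1), (n,2). -/

import Mathlib

/-!
Write `x = y e_{1,n}` and `D = Δ x`. For a strictly lower matrix unit `e = e_{i,j}` with
`i ≠ n` and `j ≠ 1` we have `x e + e x = 0`, so the Jordan identity gives
`D e + e D = -(x Δ(e) + Δ(e) x)`, a matrix supported on row `1` and column `n`. Reading off
entries of `D e + e D` kills every off-diagonal entry of `D` outside row `1`, column `n` and
the four exceptional positions. For a diagonal entry `D_{j,j}` with `1 < j < n` take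
`a = e_{i,j} + e_{j,l}` with `l < j < i` and `a x a = 0`; in a 2-torsion free ring a Jordan
derivation satisfies `Δ(a b a) = Δ(a) b a + a Δ(b) a + a b Δ(a)`, and the `(i,l)` entry of
this identity for `b = x` is `D_{j,j} = 0`.
-/

open Matrix

/-- `R_n(K,J)`: the non-unital subring of `n × n` matrices over `K` whose entries on and
above the main diagonal lie in the two-sided ideal `J`. -/
def Rset (n : ℕ) (K : Type) [Ring K] (J : TwoSidedIdeal K) :
    NonUnitalSubring (Matrix (Fin n) (Fin n) K) where
  carrier := {M | ∀ i j : Fin n, i ≤ j → M i j ∈ J}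
  zero_mem' := by intro i j _; simp [J.zero_mem]
  add_mem' := by intro a b ha hb i j h; exact J.add_mem (ha i j h) (hb i j h)
  neg_mem' := by intro a ha i j h; exact J.neg_mem (ha i j h)
  mul_mem' := by
    intro a b ha hb i j h
    show (∑ k, a i k * b k j) ∈ J
    refine J.finsetSum_mem _ _ fun k _ => ?_
    rcases le_or_gt i k with hik | hik
    · exact J.mul_mem_right _ _ (ha i k hik)
    · exact J.mul_mem_left _ _ (hb k j (le_trans hik.le h))

lemma stdBasis_mem {n : ℕ} {K : Type} [Ring K] {J : TwoSidedIdeal K}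
    {i j : Fin n} {y : K} (h : i ≤ j → y ∈ J) :
    Matrix.single i j y ∈ Rset n K J := by
  intro a b hab
  rw [Matrix.single]
  by_cases hc : i = a ∧ j = b
  · obtain ⟨rfl, rfl⟩ := hc
    simpa using h hab
  · simp [Matrix.of_apply, if_neg hc, J.zero_mem]

lemma stdBasis_mem_lower {n : ℕ} {K : Type} [Ring K] {J : TwoSidedIdeal K}
    {i j : Fin n} (h : j < i) (y : K) :
    Matrix.single i j y ∈ Rset n K J :=
  stdBasis_mem fun hle => absurd hle (not_le.mpr h)

def IsJordanDerivation {R : Type*} [NonUnitalRing R] (Δ : R →+ R) : Prop :=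
  ∀ a b, Δ (a * b + b * a) = Δ a * b + b * Δ a + a * Δ b + Δ b * a

lemma eq_of_add_self_eq_add_self {G : Type*} [AddCommGroup G]
    (htf : ∀ a : G, a + a = 0 → a = 0) {a b : G} (h : a + a = b + b) : a = b :=
  sub_eq_zero.mp (htf _ (by rw [sub_add_sub_comm, h, sub_self]))

lemma NonUnitalSubring.eq_zero_of_add_self_eq_zero {ι K : Type*} [Fintype ι] [Ring K]
    {S : NonUnitalSubring (Matrix ι ι K)} (htf : ∀ a : K, a + a = 0 → a = 0) (a : S)
    (h : a + a = 0) : a = 0 := by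
  ext i j
  exact htf _ (by simpa using congr_fun (congr_fun (congrArg Subtype.val h) i) j)

namespace IsJordanDerivation

section NonUnitalRing

variable {R : Type*} [NonUnitalRing R] {Δ : R →+ R} (hΔ : IsJordanDerivation Δ)
  (htf : ∀ a : R, a + a = 0 → a = 0)
include hΔ htf

lemma map_mul_self (a : R) : Δ (a * a) = Δ a * a + a * Δ a :=
  eq_of_add_self_eq_add_self htf (by rw [← map_add, hΔ a a]; abel)

lemma map_mul_mul_self (a b : R) :
    Δ (a * b * a) = Δ a * (b * a) + a * Δ b * a + a * b * Δ a := by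
  refine eq_of_add_self_eq_add_self htf ?_
  have e : a * b * a + a * b * a
      = a * (a * b + b * a) + (a * b + b * a) * a - (a * a * b + b * (a * a)) := by
    noncomm_ring
  rw [← map_add, e, map_sub, hΔ a (a * b + b * a), hΔ (a * a) b, hΔ a b,
    map_mul_self hΔ htf]
  noncomm_ring

end NonUnitalRing

section MatrixSubring

variable {ι K : Type*} [Fintype ι] [DecidableEq ι] [Ring K]
  {S : NonUnitalSubring (Matrix ι ι K)} {Δ : S →+ S} (hΔ : IsJordanDerivation Δ)
  {p q : ι} {y : K} {x : S} (hx : (x : Matrix ι ι K) = single p q y)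
include hΔ hx

lemma map_corner_mul_single_add_single_mul_apply_eq_zero {i j : ι} (he : single i j 1 ∈ S)
    (hiq : i ≠ q) (hjp : j ≠ p) {u v : ι} (hu : u ≠ p) (hv : v ≠ q) :
    ((Δ x : Matrix ι ι K) * single i j 1 + single i j 1 * (Δ x : Matrix ι ι K) :
      Matrix ι ι K) u v = 0 := by
  set e : S := ⟨_, he⟩
  have hxe : x * e + e * x = 0 :=
    Subtype.ext (by simp [e, hx, single_mul_single_of_ne _ _ _ _ hiq.symm, hjp])
  have h := congr_fun (congr_fun (congrArg Subtype.val (hΔ x e)) u) v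
  rw [hxe, map_zero] at h
  simpa [e, hx, single_mul_apply_of_ne _ _ _ _ _ hu, mul_single_apply_of_ne _ _ _ _ _ hv]
    using h.symm

lemma map_corner_apply_eq_zero_of_row {i j : ι} (he : single i j 1 ∈ S) (hip : i ≠ p)
    (hiq : i ≠ q) (hjp : j ≠ p) {v : ι} (hvq : v ≠ q) (hvj : v ≠ j) :
    (Δ x : Matrix ι ι K) j v = 0 := by
  simpa [mul_single_apply_of_ne _ _ _ _ _ hvj] using
    hΔ.map_corner_mul_single_add_single_mul_apply_eq_zero hx he hiq hjp hip hvq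

lemma map_corner_apply_eq_zero_of_col {i j : ι} (he : single i j 1 ∈ S) (hiq : i ≠ q)
    (hjp : j ≠ p) (hjq : j ≠ q) {u : ι} (hup : u ≠ p) (hui : u ≠ i) :
    (Δ x : Matrix ι ι K) u i = 0 := by
  simpa [single_mul_apply_of_ne _ _ _ _ _ hui] using
    hΔ.map_corner_mul_single_add_single_mul_apply_eq_zero hx he hiq hjp hup hjq

lemma map_corner_apply_self_eq_zero (htf : ∀ a : S, a + a = 0 → a = 0) {i j l : ι}
    (hij : single i j 1 ∈ S) (hjl : single j l 1 ∈ S) (hji : j ≠ i) (hlj : l ≠ j)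
    (hjp : j ≠ p) (hjq : j ≠ q) (hcorner : ¬(l = p ∧ i = q)) :
    (Δ x : Matrix ι ι K) j j = 0 := by
  set a : S := ⟨single i j 1 + single j l 1, S.add_mem hij hjl⟩
  have haxa : a * x * a = 0 := by
    apply Subtype.ext
    by_cases hlp : l = p
    · have hiq : i ≠ q := fun hiq => hcorner ⟨hlp, hiq⟩
      subst hlp
      simp [a, hx, add_mul, mul_add, single_mul_single_of_ne _ _ _ _ hjp, hiq.symm, hjq.symm]
    · simp [a, hx, add_mul, mul_add, single_mul_single_of_ne _ _ _ _ hjp, Ne.symm hlp]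
  have h := congr_fun (congr_fun (congrArg Subtype.val (hΔ.map_mul_mul_self htf a x)) i) l
  rw [haxa, map_zero] at h
  rcases eq_or_ne l p with rfl | hlp
  · simpa [a, hx, add_mul, mul_add, ← Matrix.mul_assoc, hji.symm, hlj, hjp, hjq,
      single_apply_of_row_ne hji, single_apply_of_col_ne _ _ hlj.symm] using h.symm
  · simpa [a, hx, add_mul, mul_add, ← Matrix.mul_assoc, hji.symm, hlj, hjp, hjq, hlp,
      single_apply_of_row_ne hji, single_apply_of_col_ne _ _ hlj.symm] using h.symm

end MatrixSubring

end IsJordanDerivation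

/-- for `y ∈ J`, `Δ(y e_{1,n})` is supported on row `1`, column `n` and
positions `(n-1,1)`, `(n-1,2)`, `(n,1)`, `(n,2)` (one-based). -/
theorem image_of_corner_unit (n : ℕ) (hn : 4 ≤ n) (K : Type) [Ring K]
    (htf : ∀ a : K, a + a = 0 → a = 0) (J : TwoSidedIdeal K)
    (Δ : ↥(Rset n K J) → ↥(Rset n K J))
    (hadd : ∀ a b : ↥(Rset n K J), Δ (a + b) = Δ a + Δ b)
    (hjord : ∀ a b : ↥(Rset n K J),
      Δ (a * b + b * a) = Δ a * b + b * Δ a + a * Δ b + Δ b * a)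
    (y : K) (hy : y ∈ J) (s t : Fin n)
    (hs : (s : ℕ) ≠ 0) (ht : (t : ℕ) ≠ n - 1)
    (h1 : ¬ ((s : ℕ) = n - 2 ∧ (t : ℕ) = 0))
    (h2 : ¬ ((s : ℕ) = n - 2 ∧ (t : ℕ) = 1))
    (h3 : ¬ ((s : ℕ) = n - 1 ∧ (t : ℕ) = 0))
    (h4 : ¬ ((s : ℕ) = n - 1 ∧ (t : ℕ) = 1)) :
    (↑(Δ ⟨Matrix.single ⟨0, by omega⟩ ⟨n - 1, by omega⟩ y,
        stdBasis_mem fun _ => hy⟩) : Matrix (Fin n) (Fin n) K) s t = 0 := by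
  have hΔ : IsJordanDerivation (AddMonoidHom.mk' Δ hadd) := hjord
  have htf' := NonUnitalSubring.eq_zero_of_add_self_eq_zero (S := Rset n K J) htf
  change (AddMonoidHom.mk' Δ hadd _ : Matrix (Fin n) (Fin n) K) s t = 0
  rcases eq_or_ne s t with rfl | hst
  · by_cases hsn : (s : ℕ) ≤ n - 3
    · refine hΔ.map_corner_apply_self_eq_zero rfl htf' (i := ⟨s + 1, by omega⟩)
        (l := ⟨0, by omega⟩) (stdBasis_mem_lower ?_ 1) (stdBasis_mem_lower ?_ 1)
        ?_ ?_ ?_ ?_ ?_ <;>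
      simp only [ne_eq, Fin.ext_iff, Fin.lt_def] <;> omega
    · refine hΔ.map_corner_apply_self_eq_zero rfl htf' (i := ⟨n - 1, by omega⟩)
        (l := ⟨1, by omega⟩) (stdBasis_mem_lower ?_ 1) (stdBasis_mem_lower ?_ 1)
        ?_ ?_ ?_ ?_ ?_ <;>
      simp only [ne_eq, Fin.ext_iff, Fin.lt_def] <;> omega
  · replace hst := Fin.val_ne_of_ne hst
    by_cases ht2 : 2 ≤ (t : ℕ)
    · refine hΔ.map_corner_apply_eq_zero_of_col rfl (j := ⟨1, by omega⟩)
        (stdBasis_mem_lower ?_ 1) ?_ ?_ ?_ ?_ ?_ <;>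
      simp only [ne_eq, Fin.ext_iff, Fin.lt_def] <;> omega
    · refine hΔ.map_corner_apply_eq_zero_of_row rfl (i := ⟨n - 2, by omega⟩)
        (stdBasis_mem_lower ?_ 1) ?_ ?_ ?_ ?_ ?_ <;>
      simp only [ne_eq, Fin.ext_iff, Fin.lt_def] <;> omega
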